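/- arXiv:1611.08089 — 6 statements merged into one kernel-verified Lean document; each statement's English description precedes it below -/
import Mathlib

section
/- A sequence (u n) of words over ℕ, viewed in Z, converges in Z if and only if it is eventually constant, or there exists N ∈ ℕ such that every letter of every word u n lies in {0,…,N−1} and the lengths |u n| tend to infinity; in the latter case the limit is ∞. -/
open OnePoint Filter Topology

/-- The list of letters of a word in the free semigroup on `ℕ`. -/
def wordLetters (u : FreeSemigroup ℕ) : List ℕ := u.head :: u.tail

/-- For a subset `U` of `OnePoint (FreeSemigroup ℕ)` and `k : ℕ`, the set of words
all of whose letters lie in `{0, …, k-1}` and which do not belong to `U`. -/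
def boundedOutside (U : Set (OnePoint (FreeSemigroup ℕ))) (k : ℕ) : Set (FreeSemigroup ℕ) :=
  {u | (∀ x ∈ wordLetters u, x < k) ∧ (u : OnePoint (FreeSemigroup ℕ)) ∉ U}

/-- The inductive-limit topology on `OnePoint (FreeSemigroup ℕ)` of the one-point
compactifications of the discrete free semigroups on the finite alphabets
`{0, …, k-1}`: a set `U` is open iff, whenever `∞ ∈ U`, for every `k` only finitely
many words with letters in `{0, …, k-1}` lie outside `U`. -/
def Ztop : TopologicalSpace (OnePoint (FreeSemigroup ℕ)) where
  IsOpen U := ∞ ∈ U → ∀ k : ℕ, (boundedOutside U k).Finite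
  isOpen_univ := fun _ k => by
    convert Set.finite_empty
    simp [boundedOutside]
  isOpen_inter := fun U V hU hV h k => by
    refine ((hU h.1 k).union (hV h.2 k)).subset ?_
    rintro u ⟨hb, hn⟩
    by_cases hu : (u : OnePoint (FreeSemigroup ℕ)) ∈ U
    · exact Or.inr ⟨hb, fun hv => hn ⟨hu, hv⟩⟩
    · exact Or.inl ⟨hb, hu⟩
  isOpen_sUnion := fun S hS h k => by
    obtain ⟨U, hUS, hU⟩ := h
    refine (hS U hUS hU k).subset ?_
    rintro u ⟨hb, hn⟩
    exact ⟨hb, fun h' => hn ⟨U, hUS, h'⟩⟩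

/-
A word `w` is isolated in `Z`, so a sequence converges to `w` exactly when it is eventually
constant. A neighbourhood of `∞` is the complement of any set of words that meets each finite
alphabet in finitely many words. Removing all words of length `< K` shows that a sequence tending
to `∞` has lengths tending to infinity; removing a subsequence whose `j`-th term has a letter
`≥ j` shows that its letters are bounded. Conversely, bounded letters and growing lengths
eventually avoid the finitely many words of each bounded alphabet that lie outside a given open
set.
-/

lemma wordLetters_injective : Function.Injective wordLetters := by
  rintro ⟨a, l⟩ ⟨b, m⟩ h
  simpa [wordLetters, FreeSemigroup.ext_iff] using h

lemma length_wordLetters (w : FreeSemigroup ℕ) : (wordLetters w).length = w.length := rfl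

lemma finite_setOf_letters_lt_length_lt (k K : ℕ) :
    {w : FreeSemigroup ℕ | (∀ x ∈ wordLetters w, x < k) ∧ w.length < K}.Finite := by
  refine Set.Finite.of_finite_image ?_ wordLetters_injective.injOn
  refine ((List.finite_length_lt (Fin k) K).image (List.map Fin.val)).subset ?_
  rintro _ ⟨w, ⟨hw, hlen⟩, rfl⟩
  refine ⟨(wordLetters w).attach.map fun x => ⟨x.1, hw x.1 x.2⟩, ?_, ?_⟩
  · simpa [length_wordLetters] using hlen
  · simp

lemma exists_letters_lt_of_eventually {u : ℕ → FreeSemigroup ℕ} {j : ℕ}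
    (h : ∀ᶠ n in atTop, ∀ x ∈ wordLetters (u n), x < j) :
    ∃ N, ∀ n, ∀ x ∈ wordLetters (u n), x < N := by
  obtain ⟨M, hM⟩ := eventually_atTop.1 h
  obtain ⟨B, hB⟩ : BddAbove (⋃ m ∈ Set.Iio M, {x | x ∈ wordLetters (u m)}) :=
    ((Set.finite_Iio M).biUnion fun m _ => (wordLetters (u m)).finite_toSet).bddAbove
  refine ⟨max j (B + 1), fun n x hx => ?_⟩
  rcases lt_or_ge n M with hn | hn
  · have : x ≤ B := hB (Set.mem_biUnion hn hx)
    omega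
  · exact lt_max_of_lt_left (hM n hn x hx)

section

local instance : TopologicalSpace (OnePoint (FreeSemigroup ℕ)) := Ztop

lemma isOpen_singleton_coe (w : FreeSemigroup ℕ) : IsOpen {(w : OnePoint (FreeSemigroup ℕ))} :=
  fun h => absurd h (by simp)

lemma tendsto_nhds_coe_iff {ι : Type*} {l : Filter ι} {f : ι → FreeSemigroup ℕ}
    {w : FreeSemigroup ℕ} :
    Tendsto (fun i => (f i : OnePoint (FreeSemigroup ℕ))) l (𝓝 w) ↔ ∀ᶠ i in l, f i = w := by
  rw [(isOpen_singleton_iff_nhds_eq_pure _).1 (isOpen_singleton_coe w), tendsto_pure]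
  simp only [coe_eq_coe]

lemma isOpen_compl_image_coe_of_finite {s : Set (FreeSemigroup ℕ)}
    (hs : ∀ k, {w ∈ s | ∀ x ∈ wordLetters w, x < k}.Finite) :
    IsOpen ((↑) '' s : Set (OnePoint (FreeSemigroup ℕ)))ᶜ := fun _ k =>
  (hs k).subset fun w ⟨hw, hws⟩ => ⟨by simpa using hws, hw⟩

lemma eventually_notMem_of_tendsto_infty {ι : Type*} {l : Filter ι} {f : ι → FreeSemigroup ℕ}
    (h : Tendsto (fun i => (f i : OnePoint (FreeSemigroup ℕ))) l (𝓝 ∞))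
    {s : Set (FreeSemigroup ℕ)} (hs : ∀ k, {w ∈ s | ∀ x ∈ wordLetters w, x < k}.Finite) :
    ∀ᶠ i in l, f i ∉ s :=
  Eventually.mono (h ((isOpen_compl_image_coe_of_finite hs).mem_nhds (by simp)))
    fun _ hi his => hi ⟨_, his, rfl⟩

lemma tendsto_length_of_tendsto_infty {ι : Type*} {l : Filter ι} {f : ι → FreeSemigroup ℕ}
    (h : Tendsto (fun i => (f i : OnePoint (FreeSemigroup ℕ))) l (𝓝 ∞)) :
    Tendsto (fun i => (f i).length) l atTop := by
  refine tendsto_atTop.2 fun K => ?_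
  refine (eventually_notMem_of_tendsto_infty h (s := {w | w.length < K}) fun k => ?_).mono
    fun _ hi => not_lt.1 hi
  exact (finite_setOf_letters_lt_length_lt k K).subset fun w ⟨hlen, hw⟩ => ⟨hw, hlen⟩

lemma exists_letters_lt_of_tendsto_infty {u : ℕ → FreeSemigroup ℕ}
    (h : Tendsto (fun n => (u n : OnePoint (FreeSemigroup ℕ))) atTop (𝓝 ∞)) :
    ∃ N, ∀ n, ∀ x ∈ wordLetters (u n), x < N := by
  by_contra hb
  have large_letters : ∀ j, ∃ᶠ n in atTop, ∃ x ∈ wordLetters (u n), j ≤ x := fun j hj =>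
    hb (exists_letters_lt_of_eventually (hj.mono fun n hn x hx => not_le.1 fun hjx =>
      hn ⟨x, hx, hjx⟩))
  obtain ⟨φ, hφ, hφj⟩ := extraction_forall_of_frequently large_letters
  have hfinite : ∀ k, {w ∈ Set.range (u ∘ φ) | ∀ x ∈ wordLetters w, x < k}.Finite := by
    refine fun k => ((Set.finite_Iio k).image (u ∘ φ)).subset ?_
    rintro _ ⟨⟨j, rfl⟩, hw⟩
    obtain ⟨x, hx, hjx⟩ := hφj j
    exact ⟨j, lt_of_le_of_lt hjx (hw x hx), rfl⟩
  obtain ⟨j, hj⟩ := (eventually_notMem_of_tendsto_infty (h.comp hφ.tendsto_atTop) hfinite).exists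
  exact hj ⟨j, rfl⟩

lemma tendsto_infty_of_letters_lt {ι : Type*} {l : Filter ι} {f : ι → FreeSemigroup ℕ} {N : ℕ}
    (hb : ∀ i, ∀ x ∈ wordLetters (f i), x < N) (hl : Tendsto (fun i => (f i).length) l atTop) :
    Tendsto (fun i => (f i : OnePoint (FreeSemigroup ℕ))) l (𝓝 ∞) := by
  refine tendsto_nhds.2 fun U hU hmem => ?_
  obtain ⟨K, hK⟩ := ((hU hmem N).image FreeSemigroup.length).bddAbove
  filter_upwards [hl.eventually_gt_atTop K] with i hi
  by_contra hiU
  exact hi.not_ge (hK ⟨f i, ⟨hb i, hiU⟩, rfl⟩)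

end

/-- A sequence of words over `ℕ`, viewed in `Z = OnePoint (FreeSemigroup ℕ)` with the
inductive-limit topology, converges iff it is eventually constant or there is `N` such
that all letters of all terms lie in `{0, …, N-1}` and the lengths tend to infinity;
in the latter case the limit is `∞`. -/
theorem converges_iff_Ztop (u : ℕ → FreeSemigroup ℕ) :
    letI : TopologicalSpace (OnePoint (FreeSemigroup ℕ)) := Ztop
    ((∃ L : OnePoint (FreeSemigroup ℕ),
        Tendsto (fun n => ((u n : OnePoint (FreeSemigroup ℕ)))) atTop (𝓝 L))
      ↔ ((∃ N, ∀ m ≥ N, u m = u N)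
          ∨ (∃ N : ℕ, (∀ n, ∀ x ∈ wordLetters (u n), x < N)
              ∧ Tendsto (fun n => (u n).length) atTop atTop)))
    ∧ ((∃ N : ℕ, (∀ n, ∀ x ∈ wordLetters (u n), x < N)
          ∧ Tendsto (fun n => (u n).length) atTop atTop)
        → Tendsto (fun n => ((u n : OnePoint (FreeSemigroup ℕ)))) atTop (𝓝 ∞)) := by
  let := Ztop
  have to_infty : (∃ N : ℕ, (∀ n, ∀ x ∈ wordLetters (u n), x < N)
      ∧ Tendsto (fun n => (u n).length) atTop atTop) →
      Tendsto (fun n => ((u n : OnePoint (FreeSemigroup ℕ)))) atTop (𝓝 ∞) :=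
    fun ⟨_, hb, hl⟩ => tendsto_infty_of_letters_lt hb hl
  refine ⟨⟨fun ⟨L, hL⟩ => ?_, ?_⟩, to_infty⟩
  · induction L using OnePoint.rec with
    | infty =>
      obtain ⟨N, hN⟩ := exists_letters_lt_of_tendsto_infty hL
      exact Or.inr ⟨N, hN, tendsto_length_of_tendsto_infty hL⟩
    | coe w =>
      obtain ⟨N, hN⟩ := eventually_atTop.1 (tendsto_nhds_coe_iff.1 hL)
      exact Or.inl ⟨N, fun m hm => (hN m hm).trans (hN N le_rfl).symm⟩
  · rintro (⟨N, hN⟩ | h)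
    · exact ⟨u N, tendsto_nhds_coe_iff.2 (eventually_atTop.2 ⟨N, hN⟩)⟩
    · exact ⟨∞, to_infty h⟩
end

section
/- The space Z is not compact. -/
open OnePoint Filter Topology

section Aux

lemma lettersSet_finite (k : ℕ) :
    {u : FreeSemigroup ℕ | (wordLetters u).length ≤ k ∧ ∀ x ∈ wordLetters u, x < k}.Finite := by
  have hL : {l : List ℕ | l.length ≤ k ∧ ∀ x ∈ l, x < k}.Finite := by
    have hfin : {l : List (Fin k) | l.length ≤ k}.Finite := List.finite_length_le _ _
    refine (hfin.image (List.map (Fin.val))).subset ?_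
    rintro l ⟨hlen, hmem⟩
    refine ⟨l.attach.map (fun x => ⟨x.1, hmem x.1 x.2⟩), by simpa using hlen, ?_⟩
    simp [List.map_map, Function.comp]
  exact (hL.preimage (wordLetters_injective.injOn)).subset (fun u hu => hu)

/-- The key open set: `∞` together with words all of whose letters are below the length. -/
def Vset : Set (OnePoint (FreeSemigroup ℕ)) :=
  {x | x = ∞ ∨ ∃ u : FreeSemigroup ℕ, x = ↑u ∧ ∀ m ∈ wordLetters u, m < (wordLetters u).length}

lemma Vset_open : Ztop.IsOpen Vset := by
  intro _ k
  refine (lettersSet_finite k).subset ?_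
  rintro u ⟨hb, hn⟩
  refine ⟨?_, hb⟩
  by_contra hlen
  push_neg at hlen
  exact hn (Or.inr ⟨u, rfl, fun m hm => lt_of_lt_of_le (hb m hm) (le_of_lt hlen)⟩)

lemma of_not_mem_Vset (n : ℕ) : (↑(FreeSemigroup.of (n + 1)) : OnePoint (FreeSemigroup ℕ)) ∉ Vset := by
  rintro (h | ⟨u, hu, hlt⟩)
  · exact (OnePoint.coe_ne_infty _) h
  · have := OnePoint.coe_injective hu
    subst this
    have := hlt (n + 1) (by simp [wordLetters, FreeSemigroup.of])
    simp [wordLetters, FreeSemigroup.of] at this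

end Aux

/-- The space `Z = OnePoint (FreeSemigroup ℕ)`, with the inductive-limit topology of
the one-point compactifications of the discrete free semigroups on finite alphabets,
is not compact. -/
theorem Ztop_not_compactSpace :
    letI : TopologicalSpace (OnePoint (FreeSemigroup ℕ)) := Ztop
    ¬ CompactSpace (OnePoint (FreeSemigroup ℕ)) := by
  intro hc
  letI : TopologicalSpace (OnePoint (FreeSemigroup ℕ)) := Ztop
  have hcompact : IsCompact (Set.univ : Set (OnePoint (FreeSemigroup ℕ))) := hc.isCompact_univ
  set U : Option (FreeSemigroup ℕ) → Set (OnePoint (FreeSemigroup ℕ)) :=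
    fun o => o.elim Vset (fun u => {↑u}) with hU
  have hopen : ∀ o, IsOpen (U o) := by
    rintro (_ | u)
    · exact Vset_open
    · intro h _
      exact absurd h (by simp [hU, OnePoint.infty_ne_coe])
  have hcover : (Set.univ : Set (OnePoint (FreeSemigroup ℕ))) ⊆ ⋃ o, U o := by
    rintro (_ | u) -
    · exact Set.mem_iUnion.2 ⟨none, Or.inl rfl⟩
    · exact Set.mem_iUnion.2 ⟨Option.some u, rfl⟩
  obtain ⟨t, ht⟩ := hcompact.elim_finite_subcover U hopen hcover
  have hinj : Function.Injective (fun n : ℕ => (Option.some (FreeSemigroup.of (n + 1)) : Option (FreeSemigroup ℕ))) := by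
    intro a b h
    simpa [Option.some.injEq, FreeSemigroup.of, FreeSemigroup.mk.injEq] using h
  have hmem : ∀ n : ℕ, (Option.some (FreeSemigroup.of (n + 1)) : Option (FreeSemigroup ℕ)) ∈ t := by
    intro n
    have := ht (Set.mem_univ (↑(FreeSemigroup.of (n + 1)) : OnePoint (FreeSemigroup ℕ)))
    rw [Set.mem_iUnion₂] at this
    obtain ⟨o, hot, ho⟩ := this
    match o with
    | Option.none => exact absurd ho (of_not_mem_Vset n)
    | Option.some u =>
      obtain rfl := OnePoint.coe_injective (Set.mem_singleton_iff.1 ho).symm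
      exact hot
  have hinf : (Set.range fun n : ℕ => (Option.some (FreeSemigroup.of (n + 1)) : Option (FreeSemigroup ℕ))).Infinite :=
    Set.infinite_range_of_injective hinj
  exact hinf (t.finite_toSet.subset (Set.range_subset_iff.2 hmem))
end

section
/- The sequence of generators (n ↦ FreeSemigroup.of n), viewed as a sequence in Z, has no convergent subsequence. -/
open OnePoint Filter Topology

/-- The sequence of generators `(xₙ)ₙ`, viewed in `Z = OnePoint (FreeSemigroup ℕ)`
with the inductive-limit topology, has no convergent subsequence. -/
theorem generators_no_convergent_subsequence :
    letI : TopologicalSpace (OnePoint (FreeSemigroup ℕ)) := Ztop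
    ¬ ∃ φ : ℕ → ℕ, StrictMono φ ∧ ∃ L : OnePoint (FreeSemigroup ℕ),
        Tendsto (fun n => ((FreeSemigroup.of (φ n) : FreeSemigroup ℕ) :
          OnePoint (FreeSemigroup ℕ))) atTop (𝓝 L) := by
  letI : TopologicalSpace (OnePoint (FreeSemigroup ℕ)) := Ztop
  rintro ⟨φ, hφ, L, hL⟩
  have hof : Function.Injective (FreeSemigroup.of : ℕ → FreeSemigroup ℕ) := by
    intro a b h
    exact congrArg FreeSemigroup.head h
  cases L with
  | infty =>
    set U : Set (OnePoint (FreeSemigroup ℕ)) :=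
      {x | ∀ m : ℕ, x ≠ ((FreeSemigroup.of m : FreeSemigroup ℕ) : OnePoint (FreeSemigroup ℕ))}
      with hUdef
    have hinf : (∞ : OnePoint (FreeSemigroup ℕ)) ∈ U := fun m => OnePoint.infty_ne_coe _
    have hUopen : IsOpen U := by
      intro _ k
      refine ((Set.finite_Iio k).image (FreeSemigroup.of : ℕ → FreeSemigroup ℕ)).subset ?_
      rintro u ⟨hb, hn⟩
      simp only [hUdef, Set.mem_setOf_eq, not_forall, not_not] at hn
      obtain ⟨m, hm⟩ := hn
      have hum : u = FreeSemigroup.of m := by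
        exact_mod_cast hm
      refine ⟨m, ?_, hum.symm⟩
      have := hb u.head (by simp [wordLetters])
      rwa [hum] at this
    have := (hL.eventually (hUopen.mem_nhds hinf)).exists
    obtain ⟨n, hn⟩ := this
    exact hn (φ n) rfl
  | coe u =>
    have hUopen : IsOpen ({(u : OnePoint (FreeSemigroup ℕ))} : Set (OnePoint (FreeSemigroup ℕ))) := by
      intro hinf
      exact absurd hinf (by simp [OnePoint.infty_ne_coe])
    have hev := hL.eventually (hUopen.mem_nhds rfl)
    rw [eventually_atTop] at hev
    obtain ⟨N, hN⟩ := hev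
    have h1 : FreeSemigroup.of (φ N) = u :=
      OnePoint.coe_injective (hN N le_rfl)
    have h2 : FreeSemigroup.of (φ (N + 1)) = u :=
      OnePoint.coe_injective (hN (N + 1) (Nat.le_succ N))
    have : φ N = φ (N + 1) := hof (h1.trans h2.symm)
    exact absurd this (Nat.ne_of_lt (hφ (Nat.lt_succ_self N)))
end

section
/- The sequence (n ↦ x₀x₁⋯xₙ), where xᵢ = FreeSemigroup.of i, viewed as a sequence in Z, has no convergent subsequence, even though the lengths of its terms tend to infinity. -/
open OnePoint Filter Topology

/-- The word `x₀ x₁ ⋯ xₙ` in the free semigroup on `ℕ`. -/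
def initialProdWord : ℕ → FreeSemigroup ℕ
  | 0 => FreeSemigroup.of 0
  | n + 1 => initialProdWord n * FreeSemigroup.of (n + 1)

/-!
The terms of the sequence are pairwise distinct, and the word `x₀ ⋯ xₙ` uses the letter `n`,
so a fixed finite alphabet `{0, …, k-1}` contains only the first `k` of them. Hence the range
of the sequence is closed (its complement is an open neighbourhood of `∞`) and, like every set
of words, discrete: the singletons `{x₀ ⋯ xₙ}` form a locally finite family. A subsequence of an
injective sequence with this property cannot converge.
-/

theorem LocallyFinite.not_tendsto_nhds {X ι : Type*} [TopologicalSpace X] {f : ι → X}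
    (hf : LocallyFinite fun i => ({f i} : Set X)) {l : Filter ι} [l.NeBot] (hl : l ≤ cofinite)
    (x : X) : ¬ Tendsto f l (𝓝 x) := by
  intro hx
  obtain ⟨U, hU, hfin⟩ := hf x
  have hout : ∀ᶠ i in l, f i ∉ U :=
    hl <| hfin.subset fun i hi => Set.singleton_inter_nonempty.mpr (not_not.mp hi)
  have hin : ∀ᶠ i in l, f i ∈ U := hx hU
  obtain ⟨i, hiU, hiU'⟩ := (hin.and hout).exists
  exact hiU' hiU

lemma wordLetters_mul_of (u : FreeSemigroup ℕ) (a : ℕ) :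
    wordLetters (u * FreeSemigroup.of a) = wordLetters u ++ [a] := rfl

lemma wordLetters_initialProdWord (n : ℕ) :
    wordLetters (initialProdWord n) = List.range (n + 1) := by
  induction n with
  | zero => rfl
  | succ n ih => rw [initialProdWord, wordLetters_mul_of, ih, ← List.range_succ]

lemma length_initialProdWord (n : ℕ) : (initialProdWord n).length = n + 1 := by
  induction n with
  | zero => rfl
  | succ n ih => rw [initialProdWord, FreeSemigroup.length_mul, ih, FreeSemigroup.length_of]

lemma initialProdWord_injective : Function.Injective initialProdWord := fun m n h => by
  simpa [length_initialProdWord] using congrArg FreeSemigroup.length h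

lemma isOpen_of_compl_range_initialProdWord_subset {U : Set (OnePoint (FreeSemigroup ℕ))}
    (hU : (Set.range fun n => (initialProdWord n : OnePoint (FreeSemigroup ℕ)))ᶜ ⊆ U) :
    IsOpen[Ztop] U := fun _ k => by
  refine ((Set.finite_Iio k).image initialProdWord).subset ?_
  rintro u ⟨hletters, huU⟩
  obtain ⟨n, hn⟩ := not_not.mp fun h => huU (hU h)
  have hn : initialProdWord n = u := OnePoint.coe_injective hn
  refine ⟨n, hletters n ?_, hn⟩
  simp [← hn, wordLetters_initialProdWord]

lemma locallyFinite_initialProdWord :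
    letI : TopologicalSpace (OnePoint (FreeSemigroup ℕ)) := Ztop
    LocallyFinite fun n => {(initialProdWord n : OnePoint (FreeSemigroup ℕ))} := by
  let : TopologicalSpace (OnePoint (FreeSemigroup ℕ)) := Ztop
  intro x
  set w : ℕ → OnePoint (FreeSemigroup ℕ) := fun n => initialProdWord n
  have hw : Function.Injective w := OnePoint.coe_injective.comp initialProdWord_injective
  refine ⟨insert x (Set.range w)ᶜ, ?_, ?_⟩
  · refine IsOpen.mem_nhds ?_ (Set.mem_insert x _)
    exact isOpen_of_compl_range_initialProdWord_subset (Set.subset_insert x _)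
  · refine ((Set.finite_singleton x).preimage hw.injOn).subset fun n ⟨y, hyn, hyU⟩ => ?_
    rw [Set.mem_singleton_iff.mp hyn] at hyU
    exact hyU.resolve_right (not_not.mpr ⟨n, rfl⟩)

/-- The sequence `(x₀x₁⋯xₙ)ₙ`, viewed in `Z = OnePoint (FreeSemigroup ℕ)` with the
inductive-limit topology, has no convergent subsequence, even though the lengths of its
terms tend to infinity. -/
theorem initialProdWord_no_convergent_subsequence :
    letI : TopologicalSpace (OnePoint (FreeSemigroup ℕ)) := Ztop
    Tendsto (fun n => (initialProdWord n).length) atTop atTop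
    ∧ ¬ ∃ φ : ℕ → ℕ, StrictMono φ ∧ ∃ L : OnePoint (FreeSemigroup ℕ),
        Tendsto (fun n => ((initialProdWord (φ n) : OnePoint (FreeSemigroup ℕ))))
          atTop (𝓝 L) := by
  let : TopologicalSpace (OnePoint (FreeSemigroup ℕ)) := Ztop
  refine ⟨?_, fun ⟨φ, hφ, L, hL⟩ => ?_⟩
  · simpa only [length_initialProdWord] using tendsto_add_atTop_nat 1
  · refine (locallyFinite_initialProdWord.comp_injective hφ.injective).not_tendsto_nhds ?_ L hL
    exact Nat.cofinite_eq_atTop.ge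
end

section
/- Let Σ be a set of pairs of words over ℕ in which every pair is balanced, and let Λ be the fully invariant congruence generated by Σ. Then every Λ-class, viewed as a subset of Z (a set of words, not containing ∞), is a clopen subset of Z; consequently, for the relation θ on Z whose classes are the Λ-classes together with the singleton {∞}, any two distinct θ-classes are separated by a clopen union of θ-classes. -/
open OnePoint Filter Topology

/-- The fully invariant congruence on `FreeSemigroup ℕ` generated by a set `E` of pairs
of words: the congruence generated by all pairs `(φ u, φ v)` with `(u, v) ∈ E` and `φ` a
semigroup endomorphism of `FreeSemigroup ℕ`. -/
def ficCongruence (E : Set (FreeSemigroup ℕ × FreeSemigroup ℕ)) : Con (FreeSemigroup ℕ) :=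
  conGen (fun a b => ∃ p ∈ E, ∃ φ : FreeSemigroup ℕ →ₙ* FreeSemigroup ℕ,
    a = φ p.1 ∧ b = φ p.2)

/-- A pair of words over `ℕ` is balanced if every letter occurs the same number of times
in both components. -/
def BalancedPair (p : FreeSemigroup ℕ × FreeSemigroup ℕ) : Prop :=
  ∀ x : ℕ, (wordLetters p.1).count x = (wordLetters p.2).count x

/-- The relation `θ` on `Z = OnePoint (FreeSemigroup ℕ)` whose classes are the classes of
the fully invariant congruence generated by `E` together with the singleton `{∞}`. -/
def thetaRel (E : Set (FreeSemigroup ℕ × FreeSemigroup ℕ))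
    (a b : OnePoint (FreeSemigroup ℕ)) : Prop :=
  (a = ∞ ∧ b = ∞) ∨ ∃ u v : FreeSemigroup ℕ, ficCongruence E u v
    ∧ a = (u : OnePoint (FreeSemigroup ℕ)) ∧ b = (v : OnePoint (FreeSemigroup ℕ))

/-!
Balanced identities, and hence all their substitution instances, preserve the multiset of
letters of a word, so every class of the fully invariant congruence consists of
rearrangements of one word and is finite. A finite set of words is clopen in `Z`: it is open
because it avoids `∞`, and closed because its complement omits only finitely many words over
each finite alphabet. The `θ`-class `{∞}` is not open, so it is separated from the class of a
word by the complement of the latter.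
-/

def letters (u : FreeSemigroup ℕ) : Multiset ℕ := wordLetters u

theorem letters_mul (u v : FreeSemigroup ℕ) : letters (u * v) = letters u + letters v := rfl

theorem letters_of (x : ℕ) : letters (FreeSemigroup.of x) = {x} := rfl

theorem letters_map (φ : FreeSemigroup ℕ →ₙ* FreeSemigroup ℕ) (w : FreeSemigroup ℕ) :
    letters (φ w) = (letters w).bind fun x => letters (φ (FreeSemigroup.of x)) := by
  induction w using FreeSemigroup.recOnMul with
  | ih1 x => simp [letters_of]
  | ih2 x y ihx ihy => rw [map_mul, letters_mul, letters_mul, ihx, ihy, Multiset.add_bind]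

theorem BalancedPair.letters_eq {p : FreeSemigroup ℕ × FreeSemigroup ℕ} (hp : BalancedPair p) :
    letters p.1 = letters p.2 :=
  Multiset.coe_eq_coe.mpr (List.perm_iff_count.mpr hp)

def letterCon : Con (FreeSemigroup ℕ) where
  toSetoid := Setoid.ker letters
  mul' h₁ h₂ := by
    simp only [Setoid.ker_def, letters_mul] at *
    rw [h₁, h₂]

theorem ficCongruence_le_letterCon {E : Set (FreeSemigroup ℕ × FreeSemigroup ℕ)}
    (hE : ∀ p ∈ E, BalancedPair p) : ficCongruence E ≤ letterCon := by
  refine Con.conGen_le.mpr ?_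
  rintro _ _ ⟨p, hp, φ, rfl, rfl⟩
  change letters (φ p.1) = letters (φ p.2)
  rw [letters_map, letters_map, (hE p hp).letters_eq]

theorem finite_setOf_letters_eq (m : Multiset ℕ) : {v | letters v = m}.Finite := by
  induction m using Quot.inductionOn with
  | h l =>
    have hinj : Function.Injective wordLetters := by
      rintro ⟨_, _⟩ ⟨_, _⟩ h
      simpa [wordLetters] using h
    refine Set.Finite.of_finite_image ?_ hinj.injOn
    refine l.permutations.finite_toSet.subset ?_
    rintro _ ⟨v, hv, rfl⟩
    exact List.mem_permutations.mpr (Quotient.exact hv)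

theorem finite_setOf_ficCongruence {E : Set (FreeSemigroup ℕ × FreeSemigroup ℕ)}
    (hE : ∀ p ∈ E, BalancedPair p) (u : FreeSemigroup ℕ) : {v | ficCongruence E u v}.Finite :=
  (finite_setOf_letters_eq (letters u)).subset fun _ hv =>
    (ficCongruence_le_letterCon hE hv).symm

section Ztop

attribute [local instance] Ztop

theorem Ztop_isClopen_image_coe {s : Set (FreeSemigroup ℕ)} (hs : s.Finite) :
    IsClopen (((↑) : FreeSemigroup ℕ → OnePoint (FreeSemigroup ℕ)) '' s) := by
  refine ⟨⟨fun _ k => hs.subset ?_⟩, fun h => absurd h (by simp)⟩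
  rintro u ⟨_, hu⟩
  simpa using hu

end Ztop

theorem exists_isClopen_saturated_of_not_rel {X : Type*} [TopologicalSpace X] {r : X → X → Prop}
    (hr : Equivalence r) {a b : X} (hab : ¬ r a b)
    (hclass : IsClopen {z | r a z} ∨ IsClopen {z | r b z}) :
    ∃ U : Set X, IsClopen U ∧ (∀ z z', r z z' → (z ∈ U ↔ z' ∈ U)) ∧ a ∈ U ∧ b ∉ U := by
  have hsat : ∀ c z z', r z z' → (r c z ↔ r c z') := fun c z z' h =>
    ⟨fun hz => hr.trans hz h, fun hz' => hr.trans hz' (hr.symm h)⟩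
  rcases hclass with ha | hb
  · exact ⟨_, ha, hsat a, hr.refl a, hab⟩
  · exact ⟨_, hb.compl, fun z z' h => not_congr (hsat b z z' h), fun h => hab (hr.symm h),
      fun h => h (hr.refl b)⟩

section thetaRel

variable {E : Set (FreeSemigroup ℕ × FreeSemigroup ℕ)}

theorem thetaRel_infty_left {z : OnePoint (FreeSemigroup ℕ)} : thetaRel E ∞ z ↔ z = ∞ := by
  simp [thetaRel]

theorem thetaRel_coe_left {u : FreeSemigroup ℕ} {z : OnePoint (FreeSemigroup ℕ)} :
    thetaRel E u z ↔ ∃ v, ficCongruence E u v ∧ z = v := by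
  simp [thetaRel]

theorem thetaRel_equivalence : Equivalence (thetaRel E) where
  refl a := by
    induction a using OnePoint.rec with
    | infty => exact thetaRel_infty_left.mpr rfl
    | coe u => exact thetaRel_coe_left.mpr ⟨u, (ficCongruence E).refl u, rfl⟩
  symm := by
    rintro _ _ (⟨rfl, rfl⟩ | ⟨u, v, huv, rfl, rfl⟩)
    · exact .inl ⟨rfl, rfl⟩
    · exact .inr ⟨v, u, (ficCongruence E).symm huv, rfl, rfl⟩
  trans := by
    rintro _ _ c (⟨rfl, rfl⟩ | ⟨u, v, huv, rfl, rfl⟩) hbc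
    · exact hbc
    · obtain ⟨w, hvw, rfl⟩ := thetaRel_coe_left.mp hbc
      exact .inr ⟨u, w, (ficCongruence E).trans huv hvw, rfl, rfl⟩

end thetaRel

/-- If every pair in `E` is balanced, then every class of the fully invariant congruence
generated by `E`, viewed as a subset of `Z = OnePoint (FreeSemigroup ℕ)` with the
inductive-limit topology, is clopen; consequently, any two distinct classes of the
relation `θ` (whose classes are the congruence classes together with `{∞}`) are separated
by a clopen union of `θ`-classes. -/
theorem ficCongruence_classes_clopen
    (E : Set (FreeSemigroup ℕ × FreeSemigroup ℕ)) (hE : ∀ p ∈ E, BalancedPair p) :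
    letI : TopologicalSpace (OnePoint (FreeSemigroup ℕ)) := Ztop
    (∀ u : FreeSemigroup ℕ,
      IsClopen {z : OnePoint (FreeSemigroup ℕ) | ∃ v : FreeSemigroup ℕ,
        ficCongruence E u v ∧ z = (v : OnePoint (FreeSemigroup ℕ))})
    ∧ (∀ a b : OnePoint (FreeSemigroup ℕ), ¬ thetaRel E a b →
        ∃ U : Set (OnePoint (FreeSemigroup ℕ)), IsClopen U
          ∧ (∀ z z' : OnePoint (FreeSemigroup ℕ), thetaRel E z z' → (z ∈ U ↔ z' ∈ U))
          ∧ a ∈ U ∧ b ∉ U) := by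
  let : TopologicalSpace (OnePoint (FreeSemigroup ℕ)) := Ztop
  have hclass (u : FreeSemigroup ℕ) : IsClopen {z | thetaRel E u z} := by
    convert Ztop_isClopen_image_coe (finite_setOf_ficCongruence hE u) using 1
    ext z
    simp [thetaRel_coe_left, eq_comm]
  refine ⟨fun u => by simpa only [thetaRel_coe_left] using hclass u, fun a b hab => ?_⟩
  refine exists_isClopen_saturated_of_not_rel thetaRel_equivalence hab ?_
  induction a using OnePoint.rec with
  | infty =>
    induction b using OnePoint.rec with
    | infty => exact absurd (thetaRel_infty_left.mpr rfl) hab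
    | coe v => exact .inr (hclass v)
  | coe u => exact .inl (hclass u)
end

section
/- Let Σ be a set of pairs of words over ℕ, let Λ be the fully invariant congruence generated by Σ, and let u, v be words over ℕ. Then (u,v) ∈ Λ if and only if every semigroup that satisfies all identities in Σ satisfies the identity (u,v). -/
/-- A semigroup `S` satisfies the identity `(u, v)` over the alphabet `X` if every map
`X → S` sends `u` and `v` (under the induced semigroup homomorphism) to the same
element. -/
def SatisfiesId (S : Type*) [Semigroup S] {X : Type*}
    (p : FreeSemigroup X × FreeSemigroup X) : Prop :=
  ∀ σ : X → S, FreeSemigroup.lift σ p.1 = FreeSemigroup.lift σ p.2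

/-- `spow x n` is the power `x ^ (n + 1)` in a semigroup. -/
def spow {S : Type*} [Semigroup S] (x : S) : ℕ → S
  | 0 => x
  | n + 1 => spow x n * x

/-- `z` is an (absorbing) zero element of `S`. -/
def IsZeroElem {S : Type*} [Mul S] (z : S) : Prop :=
  ∀ s : S, z * s = z ∧ s * z = z

/-- A semigroup is nil if it has a zero element `z` and every element `x` has some power
`x ^ n`, `n ≥ 1`, equal to `z`. -/
def IsNilSemigroup (S : Type*) [Semigroup S] : Prop :=
  ∃ z : S, IsZeroElem z ∧ ∀ x : S, ∃ n : ℕ, spow x n = z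

/-! An identity holding in `S` is respected by every homomorphism from the free semigroup to
`S`, so the kernel of such a homomorphism contains all substitution instances of `E` and hence
`ficCongruence E`. Conversely, the quotient of the free semigroup by `ficCongruence E` satisfies
`E`, because every assignment into it lifts along the quotient map to an endomorphism of the
free semigroup; evaluating `(u, v)` there at the generators gives `(u, v) ∈ ficCongruence E`. -/

open Function

section

variable {S T X : Type*} [Semigroup S] [Semigroup T]

theorem SatisfiesId.map_fst_eq_map_snd {p : FreeSemigroup X × FreeSemigroup X}
    (h : SatisfiesId S p) (ψ : FreeSemigroup X →ₙ* S) : ψ p.1 = ψ p.2 := by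
  simpa only [FreeSemigroup.lift_comp_of'] using h (ψ ∘ FreeSemigroup.of)

theorem SatisfiesId.of_injective {p : FreeSemigroup X × FreeSemigroup X}
    (h : SatisfiesId T p) (ι : S →ₙ* T) (hι : Injective ι) : SatisfiesId S p :=
  fun σ => hι (h.map_fst_eq_map_snd (ι.comp (FreeSemigroup.lift σ)))

theorem FreeSemigroup.exists_comp_eq_of_surjective {f : T →ₙ* S} (hf : Surjective f)
    (ψ : FreeSemigroup X →ₙ* S) : ∃ φ : FreeSemigroup X →ₙ* T, f.comp φ = ψ :=
  ⟨lift (surjInv hf ∘ ψ ∘ of), hom_ext <| funext fun _ => surjInv_eq hf _⟩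

theorem ficCongruence_le_ker {E : Set (FreeSemigroup ℕ × FreeSemigroup ℕ)}
    (hE : ∀ p ∈ E, SatisfiesId S p) (ψ : FreeSemigroup ℕ →ₙ* S) :
    ficCongruence E ≤ Con.ker ψ :=
  Con.conGen_le.mpr fun _ _ ⟨p, hp, φ, ha, hb⟩ => by
    subst ha hb
    exact (hE p hp).map_fst_eq_map_snd (ψ.comp φ)

end

theorem satisfiesId_ficCongruence_quotient {E : Set (FreeSemigroup ℕ × FreeSemigroup ℕ)}
    {p : FreeSemigroup ℕ × FreeSemigroup ℕ} (hp : p ∈ E) :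
    SatisfiesId (ficCongruence E).Quotient p := fun σ => by
  obtain ⟨φ, hφ⟩ := FreeSemigroup.exists_comp_eq_of_surjective
    (f := (ficCongruence E).mkMulHom) Quotient.mk''_surjective (FreeSemigroup.lift σ)
  rw [← hφ]
  exact (Con.eq _).mpr (ConGen.Rel.of _ _ ⟨p, hp, φ, rfl, rfl⟩)

/-- Completeness of equational logic for semigroups: `(u, v)` lies in the fully
invariant congruence generated by `E` iff every semigroup satisfying all identities in
`E` satisfies the identity `(u, v)`. -/
theorem ficCongruence_iff_satisfied (E : Set (FreeSemigroup ℕ × FreeSemigroup ℕ))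
    (u v : FreeSemigroup ℕ) :
    ficCongruence E u v
      ↔ ∀ S : Semigrp, (∀ p ∈ E, SatisfiesId S p) → SatisfiesId S (u, v) := by
  refine ⟨fun h S hE σ => ficCongruence_le_ker hE (FreeSemigroup.lift σ) h, fun h => ?_⟩
  let ι : ULift (ficCongruence E).Quotient ≃* (ficCongruence E).Quotient := MulEquiv.ulift
  have hE : ∀ p ∈ E, SatisfiesId (Semigrp.of (ULift (ficCongruence E).Quotient)) p :=
    fun p hp => (satisfiesId_ficCongruence_quotient hp).of_injective ι.toMulHom ι.injective
  have huv := (h _ hE).map_fst_eq_map_snd (ι.symm.toMulHom.comp (ficCongruence E).mkMulHom)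
  exact (Con.eq _).mp (ι.symm.injective huv)
end
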